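/- (Variation of parameters, case 3 ≤ k ≤ n−1.) Let k be an integer with 3 ≤ k ≤ n−1, let f_{k+1} : U → ℝ be a given continuous function, let b_k ∈ ℝ, let B_k : U → ℝ be differentiable, set h_k(u) := ((n−1)/(n−2))^{k−1}·|F(u)|^{(k−n)/(n−2)}·(F'(u))^{k−1}, and define f_k := (b_k + B_k)·h_k. Then f_k satisfies f_k'·g + (k+1)·a·f_{k+1}·g + (k−1)·f_k·g' + (2−k)·f_k = 0 on U if and only if B_k'(u) = −(k+1)·a·f_{k+1}(u)·((n−1)/(n−2))^{1−k}·|F(u)|^{(n−k)/(n−2)}·(F'(u))^{1−k} for all u ∈ U. -/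

import Mathlib

/-!
`h_k` solves the homogeneous equation `f' g + (k - 1) f g' + (2 - k) f = 0`: its logarithmic
derivative is `((k - n)/(n - 2)) F'/F + (k - 1) F''/F'`, while
`g' = ((n - 2)/(n - 1)) (1 - F F''/F'²)`. The equation is linear of first order, so for
`f = (b + B) h` every term except `B' h g` cancels, leaving `B' h g + (k + 1) a f_{k+1} g = 0`;
as `h` and `g` do not vanish, this is `B' = -(k + 1) a f_{k+1} / h`.
-/

/-- The function `g = ((n−2)F)/((n−1)F')`. -/
noncomputable def gFun (n : ℕ) (F : ℝ → ℝ) (u : ℝ) : ℝ :=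
  (((n : ℝ) - 2) * F u) / (((n : ℝ) - 1) * deriv F u)

/-- The solution `h_k` of the homogeneous equation. -/
noncomputable def hFun (n : ℕ) (F : ℝ → ℝ) (k : ℕ) (u : ℝ) : ℝ :=
  (((n : ℝ) - 1) / ((n : ℝ) - 2)) ^ ((k : ℤ) - 1)
    * |F u| ^ ((((k : ℝ) - (n : ℝ)) / ((n : ℝ) - 2)))
    * (deriv F u) ^ ((k : ℤ) - 1)

open Real

theorem HasDerivAt.abs_rpow_const {f : ℝ → ℝ} {f' x : ℝ} (r : ℝ) (hf : HasDerivAt f f' x)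
    (hx : f x ≠ 0) : HasDerivAt (fun y => |f y| ^ r) (|f x| ^ r * (r * f' / f x)) x := by
  have habs : |f x| ≠ 0 := abs_ne_zero.mpr hx
  refine (((hasDerivAt_abs hx).comp x hf).rpow_const (p := r) (Or.inl habs)).congr_deriv ?_
  rw [Function.comp_apply, rpow_sub_one habs]
  rcases hx.lt_or_gt with hneg | hpos
  · simp only [sign_neg hneg, SignType.coe_neg, SignType.coe_one, abs_of_neg hneg]
    field_simp
  · simp only [sign_pos hpos, SignType.coe_one, abs_of_pos hpos]
    field_simp

theorem HasDerivAt.zpow_const {f : ℝ → ℝ} {f' x : ℝ} (m : ℤ) (hf : HasDerivAt f f' x)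
    (hx : f x ≠ 0) : HasDerivAt (fun y => f y ^ m) (f x ^ m * (m * f' / f x)) x := by
  refine ((hasDerivAt_zpow m (f x) (Or.inl hx)).comp x hf).congr_deriv ?_
  rw [zpow_sub_one₀ hx]
  field_simp

section

variable {n : ℕ} {F : ℝ → ℝ} {u : ℝ}

theorem hasDerivAt_hFun (k : ℕ) (hF : DifferentiableAt ℝ F u)
    (hF' : DifferentiableAt ℝ (deriv F) u) (hFu : F u ≠ 0) (hF'u : deriv F u ≠ 0) :
    HasDerivAt (hFun n F k) (hFun n F k u * (((k : ℝ) - n) / (n - 2) * deriv F u / F u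
      + ((k : ℝ) - 1) * deriv (deriv F) u / deriv F u)) u := by
  refine (((hF.hasDerivAt.abs_rpow_const (((k : ℝ) - n) / (n - 2)) hFu).const_mul
    ((((n : ℝ) - 1) / ((n : ℝ) - 2)) ^ ((k : ℤ) - 1))).mul
    (hF'.hasDerivAt.zpow_const ((k : ℤ) - 1) hF'u)).congr_deriv ?_
  simp only [hFun]
  push_cast
  ring

theorem hasDerivAt_gFun (hn : (n : ℝ) - 1 ≠ 0) (hF : DifferentiableAt ℝ F u)
    (hF' : DifferentiableAt ℝ (deriv F) u) (hF'u : deriv F u ≠ 0) :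
    HasDerivAt (gFun n F)
      (((n : ℝ) - 2) / (n - 1) * (1 - F u * deriv (deriv F) u / deriv F u ^ 2)) u := by
  refine ((hF.hasDerivAt.const_mul ((n : ℝ) - 2)).div (hF'.hasDerivAt.const_mul ((n : ℝ) - 1))
    (mul_ne_zero hn hF'u)).congr_deriv ?_
  field_simp

theorem hFun_homogeneous (k : ℕ) (hn₁ : (n : ℝ) - 1 ≠ 0) (hn₂ : (n : ℝ) - 2 ≠ 0)
    (hF : DifferentiableAt ℝ F u)
    (hF' : DifferentiableAt ℝ (deriv F) u) (hFu : F u ≠ 0) (hF'u : deriv F u ≠ 0) :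
    deriv (hFun n F k) u * gFun n F u + ((k : ℝ) - 1) * hFun n F k u * deriv (gFun n F) u
      + (2 - (k : ℝ)) * hFun n F k u = 0 := by
  rw [(hasDerivAt_hFun k hF hF' hFu hF'u).deriv, (hasDerivAt_gFun hn₁ hF hF' hF'u).deriv, gFun]
  field_simp
  ring

theorem hFun_inv (k : ℕ) :
    (hFun n F k u)⁻¹ = (((n : ℝ) - 1) / ((n : ℝ) - 2)) ^ ((1 : ℤ) - (k : ℤ))
      * |F u| ^ ((((n : ℝ) - (k : ℝ)) / ((n : ℝ) - 2)))
      * (deriv F u) ^ ((1 : ℤ) - (k : ℤ)) := by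
  have hm : (1 : ℤ) - k = -((k : ℤ) - 1) := by ring
  have hr : ((n : ℝ) - k) / (n - 2) = -(((k : ℝ) - n) / (n - 2)) := by ring
  rw [hFun, hm, hr, zpow_neg, zpow_neg, rpow_neg (abs_nonneg _), mul_inv, mul_inv]

theorem hFun_ne_zero (k : ℕ) (hn₁ : (n : ℝ) - 1 ≠ 0) (hn₂ : (n : ℝ) - 2 ≠ 0)
    (hFu : F u ≠ 0) (hF'u : deriv F u ≠ 0) : hFun n F k u ≠ 0 := by
  unfold hFun
  have := rpow_pos_of_pos (abs_pos.mpr hFu) (((k : ℝ) - n) / (n - 2))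
  positivity

theorem gFun_ne_zero (hn₁ : (n : ℝ) - 1 ≠ 0) (hn₂ : (n : ℝ) - 2 ≠ 0) (hFu : F u ≠ 0)
    (hF'u : deriv F u ≠ 0) : gFun n F u ≠ 0 := by
  unfold gFun
  positivity

end

theorem deriv_mul_solution_eq_zero_iff {f h g : ℝ → ℝ} {α β s x : ℝ}
    (hf : DifferentiableAt ℝ f x) (hh : DifferentiableAt ℝ h x)
    (hom : deriv h x * g x + α * h x * deriv g x + β * h x = 0) :
    deriv (fun y => f y * h y) x * g x + s + α * (f x * h x) * deriv g x + β * (f x * h x) = 0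
      ↔ deriv f x * h x * g x + s = 0 := by
  have expand : deriv (fun y => f y * h y) x * g x + s + α * (f x * h x) * deriv g x
      + β * (f x * h x)
      = deriv f x * h x * g x + s + f x * (deriv h x * g x + α * h x * deriv g x + β * h x) := by
    rw [deriv_fun_mul hf hh]
    ring
  rw [expand, hom, mul_zero, add_zero]

theorem stmt15_general (n : ℕ) (hn : 4 ≤ n) (a : ℝ)
    (U : Set ℝ)
    (F : ℝ → ℝ)
    (hF₁ : ∀ u ∈ U, DifferentiableAt ℝ F u)
    (hF₂ : ∀ u ∈ U, DifferentiableAt ℝ (deriv F) u)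
    (hFne : ∀ u ∈ U, F u ≠ 0)
    (hF'pos : ∀ u ∈ U, 0 < deriv F u)
    (k : ℕ)
    (fk1 : ℝ → ℝ)
    (bk : ℝ) (Bk : ℝ → ℝ) (hBk : ∀ u ∈ U, DifferentiableAt ℝ Bk u) :
    (∀ u ∈ U,
      deriv (fun x => (bk + Bk x) * hFun n F k x) u * gFun n F u
        + ((k : ℝ) + 1) * a * fk1 u * gFun n F u
        + ((k : ℝ) - 1) * ((bk + Bk u) * hFun n F k u) * deriv (gFun n F) u
        + (2 - (k : ℝ)) * ((bk + Bk u) * hFun n F k u) = 0) ↔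
    (∀ u ∈ U,
      deriv Bk u = -((k : ℝ) + 1) * a * fk1 u
        * (((n : ℝ) - 1) / ((n : ℝ) - 2)) ^ ((1 : ℤ) - (k : ℤ))
        * |F u| ^ ((((n : ℝ) - (k : ℝ)) / ((n : ℝ) - 2)))
        * (deriv F u) ^ ((1 : ℤ) - (k : ℤ))) := by
  have hn' : (4 : ℝ) ≤ n := by exact_mod_cast hn
  have hn₁ : (n : ℝ) - 1 ≠ 0 := by linarith
  have hn₂ : (n : ℝ) - 2 ≠ 0 := by linarith
  refine forall₂_congr fun u hu => ?_
  have hF'u := (hF'pos u hu).ne'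
  have hh := hFun_ne_zero k hn₁ hn₂ (hFne u hu) hF'u
  have hg := gFun_ne_zero hn₁ hn₂ (hFne u hu) hF'u
  refine (deriv_mul_solution_eq_zero_iff ((hBk u hu).const_add bk)
    (hasDerivAt_hFun k (hF₁ u hu) (hF₂ u hu) (hFne u hu) hF'u).differentiableAt
    (hFun_homogeneous k hn₁ hn₂ (hF₁ u hu) (hF₂ u hu) (hFne u hu) hF'u)).trans ?_
  have factor : deriv Bk u * hFun n F k u * gFun n F u + ((k : ℝ) + 1) * a * fk1 u * gFun n F u
      = (deriv Bk u - -((k : ℝ) + 1) * a * fk1 u * (hFun n F k u)⁻¹)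
        * (hFun n F k u * gFun n F u) := by
    field_simp
    ring
  rw [deriv_const_add, factor, mul_eq_zero, sub_eq_zero, or_iff_left (mul_ne_zero hh hg), hFun_inv]
  simp only [mul_assoc]

theorem stmt15 (n : ℕ) (hn : 4 ≤ n) (a : ℝ)
    (U : Set ℝ) (hU : IsOpen U) (hUc : U.OrdConnected)
    (F : ℝ → ℝ)
    (hF₁ : ∀ u ∈ U, DifferentiableAt ℝ F u)
    (hF₂ : ∀ u ∈ U, DifferentiableAt ℝ (deriv F) u)
    (hFne : ∀ u ∈ U, F u ≠ 0)
    (hF'pos : ∀ u ∈ U, 0 < deriv F u)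
    (k : ℕ) (hk3 : 3 ≤ k) (hkn : k ≤ n - 1)
    (fk1 : ℝ → ℝ) (hfk1 : ContinuousOn fk1 U)
    (bk : ℝ) (Bk : ℝ → ℝ) (hBk : ∀ u ∈ U, DifferentiableAt ℝ Bk u) :
    (∀ u ∈ U,
      deriv (fun x => (bk + Bk x) * hFun n F k x) u * gFun n F u
        + ((k : ℝ) + 1) * a * fk1 u * gFun n F u
        + ((k : ℝ) - 1) * ((bk + Bk u) * hFun n F k u) * deriv (gFun n F) u
        + (2 - (k : ℝ)) * ((bk + Bk u) * hFun n F k u) = 0) ↔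
    (∀ u ∈ U,
      deriv Bk u = -((k : ℝ) + 1) * a * fk1 u
        * (((n : ℝ) - 1) / ((n : ℝ) - 2)) ^ ((1 : ℤ) - (k : ℤ))
        * |F u| ^ ((((n : ℝ) - (k : ℝ)) / ((n : ℝ) - 2)))
        * (deriv F u) ^ ((1 : ℤ) - (k : ℤ))) :=
  stmt15_general n hn a U F hF₁ hF₂ hFne hF'pos k fk1 bk Bk hBk
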